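/- Let p ≥ 1 be a real number, let i be an integer with 0 ≤ i < n, let ℳ ⊆ 𝒦ⁿ and let K, L ∈ ℳ. If either A_{−p,i}(K,Q) = A_{−p,i}(L,Q) for all Q ∈ ℳ, or A_{−p,i}(K,Q)/A_i(K) = A_{−p,i}(L,Q)/A_i(L) for all Q ∈ ℳ, then K and L have the same half-width function, i.e. b(K,u) = b(L,u) for all u ∈ S^{n−1}. -/

import Mathlib

open MeasureTheory Metric Filter Set
open scoped RealInnerProductSpace ENNReal

noncomputable section

abbrev Euc (n : ℕ) := EuclideanSpace ℝ (Fin n)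

/-- Support function `h(K,x) = sup {⟨x,y⟩ : y ∈ K}`. -/
def suppFn {n : ℕ} (K : Set (Euc n)) (x : Euc n) : ℝ :=
  sSup ((fun y => ⟪x, y⟫) '' K)

/-- Half width of `K` in direction `u`: `b(K,u) = (h(K,u)+h(K,-u))/2`. -/
def halfWidth {n : ℕ} (K : Set (Euc n)) (u : Euc n) : ℝ :=
  (suppFn K u + suppFn K (-u)) / 2

/-- A convex body containing the origin in its interior. -/
def IsConvexBody {n : ℕ} (K : Set (Euc n)) : Prop :=
  IsCompact K ∧ Convex ℝ K ∧ (0 : Euc n) ∈ interior K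

/-- Spherical Lebesgue measure on the unit sphere. -/
def sphMeasure (n : ℕ) : Measure (sphere (0 : Euc n) 1) :=
  (volume : Measure (Euc n)).toSphere

/-- Width integral `A_i(K) = (1/n) ∫_{S^{n-1}} b(K,u)^{n-i} dS(u)`. -/
def widthIntegral (n i : ℕ) (K : Set (Euc n)) : ℝ :=
  (1 / (n : ℝ)) * ∫ u : sphere (0 : Euc n) 1,
    halfWidth K (u : Euc n) ^ ((n : ℝ) - i) ∂(sphMeasure n)

/-- `K` and `L` have similar width: `b(L,·) = λ b(K,·)` on the sphere for some `λ > 0`. -/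
def SimilarWidth {n : ℕ} (K L : Set (Euc n)) : Prop :=
  ∃ lam : ℝ, 0 < lam ∧ ∀ u : Euc n, ‖u‖ = 1 → halfWidth L u = lam * halfWidth K u

/-- The class `Φ`: convex, strictly decreasing `φ : (0,∞) → (0,∞)` with
`φ(0⁺)=∞`, `φ(∞)=0`, `φ(1)=1`. -/
structure IsOrliczPhi (φ : ℝ → ℝ) : Prop where
  convexOn : ConvexOn ℝ (Set.Ioi (0 : ℝ)) φ
  strictAntiOn : StrictAntiOn φ (Set.Ioi (0 : ℝ))
  pos : ∀ t : ℝ, 0 < t → 0 < φ t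
  tendsto_zero : Filter.Tendsto φ (nhdsWithin 0 (Set.Ioi 0)) Filter.atTop
  tendsto_atTop : Filter.Tendsto φ Filter.atTop (nhds 0)
  one : φ 1 = 1

/-- `L_p`-mixed width integral `A_{-p,i}(K,L) = (1/n) ∫ b(K,u)^{n-i+p} b(L,u)^{-p} dS(u)`. -/
def lpMixedWidthIntegral (n i : ℕ) (p : ℝ) (K L : Set (Euc n)) : ℝ :=
  (1 / (n : ℝ)) * ∫ u : sphere (0 : Euc n) 1,
    halfWidth K (u : Euc n) ^ ((n : ℝ) - i + p) * halfWidth L (u : Euc n) ^ (-p) ∂(sphMeasure n)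


section Aux
open Real
open scoped Pointwise

-- suppFn is ≥ each inner product
lemma le_suppFn {n : ℕ} {K : Set (Euc n)} (hK : IsCompact K) {y : Euc n} (hy : y ∈ K)
    (x : Euc n) : ⟪x, y⟫ ≤ suppFn K x := by
  apply le_csSup
  · exact (hK.image (Continuous.inner continuous_const continuous_id)).bddAbove
  · exact ⟨y, hy, rfl⟩

lemma suppFn_le {n : ℕ} {K : Set (Euc n)} (hne : K.Nonempty) {x : Euc n} {c : ℝ}
    (h : ∀ y ∈ K, ⟪x, y⟫ ≤ c) : suppFn K x ≤ c := by
  apply csSup_le (hne.image _)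
  rintro z ⟨y, hy, rfl⟩
  exact h y hy

-- Lipschitz bound
lemma suppFn_sub_le {n : ℕ} {K : Set (Euc n)} (hK : IsCompact K) (hne : K.Nonempty)
    {R : ℝ} (hR : ∀ y ∈ K, ‖y‖ ≤ R) (x x' : Euc n) :
    suppFn K x ≤ suppFn K x' + R * ‖x - x'‖ := by
  apply suppFn_le hne
  intro y hy
  have h1 : ⟪x, y⟫ = ⟪x', y⟫ + ⟪x - x', y⟫ := by
    rw [inner_sub_left]; ring
  have h2 : ⟪x - x', y⟫ ≤ ‖x - x'‖ * ‖y‖ := real_inner_le_norm _ _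
  have h3 : ‖x - x'‖ * ‖y‖ ≤ R * ‖x - x'‖ := by
    rw [mul_comm]
    exact mul_le_mul_of_nonneg_right (hR y hy) (norm_nonneg _)
  have := le_suppFn hK hy x'
  linarith

lemma continuous_halfWidth {n : ℕ} {K : Set (Euc n)} (hK : IsConvexBody K) :
    Continuous (halfWidth K) := by
  obtain ⟨hc, _, h0⟩ := hK
  have hne : K.Nonempty := ⟨0, interior_subset h0⟩
  obtain ⟨R, hR⟩ := hc.isBounded.subset_closedBall 0
  have hR' : ∀ y ∈ K, ‖y‖ ≤ R := fun y hy => by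
    simpa [mem_closedBall, dist_eq_norm] using hR hy
  have hR0 : 0 ≤ R := le_trans (norm_nonneg _) (hR' 0 (interior_subset h0))
  have key : ∀ x x', |suppFn K x - suppFn K x'| ≤ R * ‖x - x'‖ := by
    intro x x'
    rw [abs_sub_le_iff]
    constructor
    · linarith [suppFn_sub_le hc hne hR' x x']
    · have := suppFn_sub_le hc hne hR' x' x
      rw [show ‖x' - x‖ = ‖x - x'‖ from norm_sub_rev _ _] at this
      linarith
  have hlip : LipschitzWith (Real.toNNReal R) (suppFn K) := by
    apply LipschitzWith.of_dist_le_mul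
    intro x x'
    rw [Real.dist_eq, dist_eq_norm]
    calc |suppFn K x - suppFn K x'| ≤ R * ‖x - x'‖ := key x x'
      _ ≤ (Real.toNNReal R) * ‖x - x'‖ :=
        mul_le_mul_of_nonneg_right (Real.le_coe_toNNReal R) (norm_nonneg _)
  have h1 : Continuous (suppFn K) := hlip.continuous
  unfold halfWidth
  fun_prop

lemma halfWidth_pos {n : ℕ} {K : Set (Euc n)} (hK : IsConvexBody K) {u : Euc n}
    (hu : ‖u‖ = 1) : 0 < halfWidth K u := by
  obtain ⟨hc, _, h0⟩ := hK
  obtain ⟨ε, hε, hball⟩ := Metric.mem_nhds_iff.mp (mem_interior_iff_mem_nhds.mp h0)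
  have hmem : ∀ v : Euc n, ‖v‖ = 1 → (ε / 2) • v ∈ K := by
    intro v hv
    apply hball
    simp [mem_ball, dist_eq_norm, norm_smul, hv, abs_of_pos hε]
    linarith
  have h1 : (ε / 2 : ℝ) ≤ suppFn K u := by
    have := le_suppFn hc (hmem u hu) u
    rwa [real_inner_smul_right, real_inner_self_eq_norm_sq, hu, one_pow, mul_one] at this
  have h2 : (ε / 2 : ℝ) ≤ suppFn K (-u) := by
    have hm : ‖-u‖ = 1 := by rwa [norm_neg]
    have := le_suppFn hc (hmem (-u) hm) (-u)
    rwa [real_inner_smul_right, real_inner_self_eq_norm_sq, hm, one_pow, mul_one] at this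
  unfold halfWidth
  linarith

lemma sphMeasure_open_pos {n : ℕ} (hn : 1 ≤ n) {s : Set (sphere (0 : Euc n) 1)}
    (hs : IsOpen s) (hne : s.Nonempty) : sphMeasure n s ≠ 0 := by
  rw [sphMeasure, Measure.toSphere_apply' _ hs.measurableSet]
  -- the cone set
  obtain ⟨U, hU, hUs⟩ := isOpen_induced_iff.mp hs
  set T : Set (Euc n) := Ioo (0:ℝ) 1 • (Subtype.val '' s) with hT
  have hTopen : IsOpen T := by
    have hEq : T = {y : Euc n | y ≠ 0} ∩ (ball (0:Euc n) 1 ∩ {y : Euc n | y ≠ 0 ∧ ‖y‖⁻¹ • y ∈ U}) := by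
      ext y
      constructor
      · rintro ⟨t, ht, z, ⟨x, hx, rfl⟩, rfl⟩
        obtain ⟨ht0, ht1⟩ := ht
        have hx1 : ‖(x : Euc n)‖ = 1 := by
          have := x.2; simpa [mem_sphere_iff_norm] using this
        have hnorm : ‖t • (x : Euc n)‖ = t := by
          rw [norm_smul, hx1, mul_one, Real.norm_eq_abs, abs_of_pos ht0]
        have hy0 : t • (x : Euc n) ≠ 0 := by
          intro h
          rw [h, norm_zero] at hnorm; linarith
        refine ⟨hy0, ?_, hy0, ?_⟩
        · rw [mem_ball, dist_zero_right, hnorm]; exact ht1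
        · rw [hnorm, smul_smul, inv_mul_cancel₀ ht0.ne', one_smul]
          have : x ∈ s := hx
          rw [← hUs] at this
          exact this
      · rintro ⟨hy0, hyb, -, hyU⟩
        have hny : 0 < ‖y‖ := norm_pos_iff.mpr hy0
        refine ⟨‖y‖, ⟨hny, by simpa [mem_ball, dist_zero_right] using hyb⟩,
          ‖y‖⁻¹ • y, ⟨⟨‖y‖⁻¹ • y, ?_⟩, ?_, rfl⟩, ?_⟩
        · rw [mem_sphere_iff_norm, sub_zero, norm_smul, Real.norm_eq_abs,
            abs_of_pos (inv_pos.mpr hny), inv_mul_cancel₀ hny.ne']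
        · rw [← hUs]; exact hyU
        · show ‖y‖ • (‖y‖⁻¹ • y) = y
          rw [smul_smul, mul_inv_cancel₀ hny.ne', one_smul]
    rw [hEq]
    apply IsOpen.inter isOpen_ne
    apply IsOpen.inter isOpen_ball
    have : {y : Euc n | y ≠ 0 ∧ ‖y‖⁻¹ • y ∈ U} = {y : Euc n | y ≠ 0} ∩ (fun y : Euc n => ‖y‖⁻¹ • y) ⁻¹' U := rfl
    rw [this]
    apply ContinuousOn.isOpen_inter_preimage _ isOpen_ne hU
    apply ContinuousOn.fun_smul _ continuousOn_id
    exact ContinuousOn.inv₀ (continuous_norm.continuousOn) (fun y hy => norm_ne_zero_iff.mpr hy)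
  have hTne : T.Nonempty := by
    obtain ⟨x, hx⟩ := hne
    exact ⟨(1/2 : ℝ) • (x : Euc n), (1/2 : ℝ), ⟨by norm_num, by norm_num⟩, x, ⟨x, hx, rfl⟩, rfl⟩
  have hpos : 0 < volume T := hTopen.measure_pos volume hTne
  have hd : (Module.finrank ℝ (Euc n) : ℝ≥0∞) ≠ 0 := by
    simp [finrank_euclideanSpace]
    omega
  exact mul_ne_zero hd hpos.ne'


lemma key_ineq {q p a b : ℝ} (hq : 0 < q) (hp : 1 ≤ p) (ha : 0 < a) (hb : 0 < b) :
    (b ^ q + (q + p) / q * (a ^ q - b ^ q) ≤ a ^ (q + p) * b ^ (-p)) ∧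
    (a ≠ b → b ^ q + (q + p) / q * (a ^ q - b ^ q) < a ^ (q + p) * b ^ (-p)) := by
  have hp0 : 0 < p := lt_of_lt_of_le one_pos hp
  set s : ℝ := (a / b) ^ q - 1 with hsdef
  have hds : 0 < a / b := div_pos ha hb
  have hspos : 0 < (a / b) ^ q := rpow_pos_of_pos hds q
  have hs : -1 ≤ s := by simp [hsdef]; linarith
  set r : ℝ := (q + p) / q with hrdef
  have hr : 1 < r := by
    rw [hrdef, lt_div_iff₀ hq]; linarith
  -- algebraic identities
  have hbq : (0:ℝ) < b ^ q := rpow_pos_of_pos hb q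
  have e1 : b ^ q * (1 + s) = a ^ q := by
    rw [hsdef]
    rw [div_rpow ha.le hb.le]
    field_simp
    ring
  have e2 : b ^ q * (1 + s) ^ r = a ^ (q + p) * b ^ (-p) := by
    have h1 : (1 + s) = (a / b) ^ q := by rw [hsdef]; ring
    have h2 : ((a / b) ^ q) ^ r = (a / b) ^ (q + p) := by
      rw [← rpow_mul hds.le, hrdef]
      congr 1
      field_simp
    have h3 : b ^ (-p) = b ^ q / b ^ (q + p) := by
      rw [← rpow_sub hb]
      congr 1
      ring
    rw [h1, h2, div_rpow ha.le hb.le, h3]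
    ring
  have e3 : b ^ q * (1 + r * s) = b ^ q + r * (a ^ q - b ^ q) := by
    have : a ^ q - b ^ q = b ^ q * s := by
      rw [← e1]; ring
    rw [this]; ring
  constructor
  · have hber : 1 + r * s ≤ (1 + s) ^ r := one_add_mul_self_le_rpow_one_add hs hr.le
    calc b ^ q + (q + p) / q * (a ^ q - b ^ q) = b ^ q * (1 + r * s) := by rw [e3, hrdef]
      _ ≤ b ^ q * (1 + s) ^ r := by nlinarith
      _ = a ^ (q + p) * b ^ (-p) := e2
  · intro hab
    have hsne : s ≠ 0 := by
      intro h0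
      have h1 : (a / b) ^ q = 1 := by
        have := hsdef; simp [hsdef] at h0; linarith
      rcases lt_trichotomy a b with hlt | heq | hgt
      · have : (a / b) ^ q < 1 := by
          apply rpow_lt_one hds.le _ hq
          rw [div_lt_one hb]; exact hlt
        linarith
      · exact hab heq
      · have : 1 < (a / b) ^ q := by
          apply one_lt_rpow (by rw [lt_div_iff₀ hb]; linarith) hq
        linarith
    have hber : 1 + r * s < (1 + s) ^ r := one_add_mul_self_lt_rpow_one_add hs hsne hr
    calc b ^ q + (q + p) / q * (a ^ q - b ^ q) = b ^ q * (1 + r * s) := by rw [e3, hrdef]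
      _ < b ^ q * (1 + s) ^ r := by nlinarith
      _ = a ^ (q + p) * b ^ (-p) := e2

instance (n : ℕ) : IsFiniteMeasure (sphMeasure n) := by
  unfold sphMeasure; infer_instance


lemma integral_combo {α : Type*} [MeasurableSpace α] {μ : Measure α} {F G : α → ℝ}
    (hf : Integrable F μ) (hg : Integrable G μ) (c : ℝ) :
    ∫ v, (G v + c * (F v - G v)) ∂μ
      = (∫ v, G v ∂μ) + c * ((∫ v, F v ∂μ) - ∫ v, G v ∂μ) := by
  have hsub : Integrable (fun v => F v - G v) μ := hf.sub hg
  have hmul : Integrable (fun v => c * (F v - G v)) μ := hsub.const_mul c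
  rw [integral_add hg hmul, integral_const_mul c, integral_sub hf hg]

variable {n : ℕ}

lemma cont_integrable {F : sphere (0 : Euc n) 1 → ℝ} (hF : Continuous F) :
    Integrable F (sphMeasure n) :=
  hF.integrable_of_hasCompactSupport (isClosed_tsupport _).isCompact

lemma cont_rpow {F : sphere (0 : Euc n) 1 → ℝ} (hF : Continuous F)
    (hFp : ∀ v, 0 < F v) (c : ℝ) : Continuous fun v => F v ^ c :=
  hF.rpow_const fun v => Or.inl (hFp v).ne'

lemma integral_key_le {q p : ℝ} (hq : 0 < q) (hp : 1 ≤ p)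
    {f g : sphere (0 : Euc n) 1 → ℝ} (hfc : Continuous f) (hgc : Continuous g)
    (hfp : ∀ v, 0 < f v) (hgp : ∀ v, 0 < g v) :
    (∫ v, g v ^ q ∂sphMeasure n) + (q + p) / q *
        ((∫ v, f v ^ q ∂sphMeasure n) - ∫ v, g v ^ q ∂sphMeasure n)
      ≤ ∫ v, f v ^ (q + p) * g v ^ (-p) ∂sphMeasure n := by
  have i1 : Integrable (fun v => f v ^ q) (sphMeasure n) := cont_integrable (cont_rpow hfc hfp q)
  have i2 : Integrable (fun v => g v ^ q) (sphMeasure n) := cont_integrable (cont_rpow hgc hgp q)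
  have i3 : Integrable (fun v => f v ^ (q + p) * g v ^ (-p)) (sphMeasure n) :=
    cont_integrable ((cont_rpow hfc hfp (q + p)).mul (cont_rpow hgc hgp (-p)))
  have i4 : Integrable (fun v => g v ^ q + (q + p) / q * (f v ^ q - g v ^ q)) (sphMeasure n) :=
    i2.add ((i1.sub i2).const_mul _)
  have hmono : (∫ v, g v ^ q + (q + p) / q * (f v ^ q - g v ^ q) ∂sphMeasure n)
      ≤ ∫ v, f v ^ (q + p) * g v ^ (-p) ∂sphMeasure n := by
    apply integral_mono i4 i3
    intro v
    exact (key_ineq hq hp (hfp v) (hgp v)).1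
  rw [integral_combo i1 i2] at hmono
  exact hmono

lemma eq_of_integral_key (hn : 2 ≤ n) {q p : ℝ} (hq : 0 < q) (hp : 1 ≤ p)
    {f g : sphere (0 : Euc n) 1 → ℝ} (hfc : Continuous f) (hgc : Continuous g)
    (hfp : ∀ v, 0 < f v) (hgp : ∀ v, 0 < g v)
    (hAB : (∫ v, f v ^ q ∂sphMeasure n) = ∫ v, g v ^ q ∂sphMeasure n)
    (hC : (∫ v, f v ^ (q + p) * g v ^ (-p) ∂sphMeasure n) = ∫ v, g v ^ q ∂sphMeasure n) :
    ∀ v, f v = g v := by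
  haveI : Fact (1 ≤ n) := ⟨by omega⟩
  haveI : (sphMeasure n).IsOpenPosMeasure :=
    ⟨fun s hs hne => sphMeasure_open_pos (by omega) hs hne⟩
  set D : sphere (0 : Euc n) 1 → ℝ :=
    fun v => f v ^ (q + p) * g v ^ (-p) - (g v ^ q + (q + p) / q * (f v ^ q - g v ^ q)) with hD
  have hDc : Continuous D := by
    apply Continuous.sub ((cont_rpow hfc hfp (q + p)).mul (cont_rpow hgc hgp (-p)))
    exact (cont_rpow hgc hgp q).add
      (continuous_const.mul ((cont_rpow hfc hfp q).sub (cont_rpow hgc hgp q)))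
  have hDnn : ∀ v, 0 ≤ D v := fun v => sub_nonneg.mpr (key_ineq hq hp (hfp v) (hgp v)).1
  have i1 : Integrable (fun v => f v ^ q) (sphMeasure n) := cont_integrable (cont_rpow hfc hfp q)
  have i2 : Integrable (fun v => g v ^ q) (sphMeasure n) := cont_integrable (cont_rpow hgc hgp q)
  have i3 : Integrable (fun v => f v ^ (q + p) * g v ^ (-p)) (sphMeasure n) :=
    cont_integrable ((cont_rpow hfc hfp (q + p)).mul (cont_rpow hgc hgp (-p)))
  have hDint : (∫ v, D v ∂sphMeasure n) = 0 := by
    have i5 : Integrable (fun v => g v ^ q + (q + p) / q * (f v ^ q - g v ^ q)) (sphMeasure n) :=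
      i2.add ((i1.sub i2).const_mul _)
    rw [hD]
    rw [integral_sub i3 i5, integral_combo i1 i2, hAB, hC]
    ring
  have hDae : D =ᵐ[sphMeasure n] 0 :=
    (integral_eq_zero_iff_of_nonneg hDnn (cont_integrable hDc)).mp hDint
  have hDzero : D = 0 := (sphMeasure n).eq_of_ae_eq hDae hDc continuous_const
  intro v
  by_contra hne
  have := (key_ineq hq hp (hfp v) (hgp v)).2 hne
  have hv : D v = 0 := by rw [hDzero]; rfl
  rw [hD] at hv
  simp only at hv
  linarith

-- positivity of ∫ g^q
lemma integral_rpow_pos (hn : 2 ≤ n) (q : ℝ)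
    {g : sphere (0 : Euc n) 1 → ℝ} (hgc : Continuous g) (hgp : ∀ v, 0 < g v) :
    0 < ∫ v, g v ^ q ∂sphMeasure n := by
  haveI : Nonempty (Fin n) := ⟨⟨0, by omega⟩⟩
  haveI : Nontrivial (Euc n) := inferInstance
  haveI : Nonempty (sphere (0 : Euc n) 1) :=
    (NormedSpace.sphere_nonempty.mpr zero_le_one).to_subtype
  haveI : (sphMeasure n).IsOpenPosMeasure :=
    ⟨fun s hs hne => sphMeasure_open_pos (by omega) hs hne⟩
  have hnn : ∀ v, 0 ≤ g v ^ q := fun v => (rpow_pos_of_pos (hgp v) q).le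
  have hint : Integrable (fun v => g v ^ q) (sphMeasure n) :=
    cont_integrable (cont_rpow hgc hgp q)
  rw [integral_pos_iff_support_of_nonneg hnn hint]
  have hsupp : Function.support (fun v => g v ^ q) = Set.univ := by
    ext v; simp [Function.mem_support, (rpow_pos_of_pos (hgp v) q).ne']
  rw [hsupp]
  exact isOpen_univ.measure_pos (sphMeasure n) univ_nonempty

end Aux

set_option maxHeartbeats 2000000 in
/-- Uniqueness for `L_p`-mixed width integrals: if either
`A_{-p,i}(K,Q) = A_{-p,i}(L,Q)` for all `Q ∈ ℳ`, or
`A_{-p,i}(K,Q)/A_i(K) = A_{-p,i}(L,Q)/A_i(L)` for all `Q ∈ ℳ`, then `K` and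
`L` have the same half-width function. -/
theorem lpMixedWidthIntegral_unique {n : ℕ} (hn : 2 ≤ n) (i : ℕ) (hi : i < n)
    (p : ℝ) (hp : 1 ≤ p)
    (M : Set (Set (Euc n))) (hM : ∀ Q ∈ M, IsConvexBody Q)
    (K L : Set (Euc n)) (hKM : K ∈ M) (hLM : L ∈ M)
    (h : (∀ Q ∈ M, lpMixedWidthIntegral n i p K Q = lpMixedWidthIntegral n i p L Q) ∨
      (∀ Q ∈ M, lpMixedWidthIntegral n i p K Q / widthIntegral n i K =
        lpMixedWidthIntegral n i p L Q / widthIntegral n i L)) :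
    ∀ u : Euc n, ‖u‖ = 1 → halfWidth K u = halfWidth L u := by
  intro u hu
  have hKb := hM K hKM
  have hLb := hM L hLM
  set q : ℝ := (n : ℝ) - i with hqdef
  have hq : 0 < q := by
    rw [hqdef]
    have : (i : ℝ) < n := by exact_mod_cast hi
    linarith
  have hp0 : 0 < p := lt_of_lt_of_le one_pos hp
  set f : sphere (0 : Euc n) 1 → ℝ := fun v => halfWidth K (v : Euc n) with hfdef
  set g : sphere (0 : Euc n) 1 → ℝ := fun v => halfWidth L (v : Euc n) with hgdef
  have hfc : Continuous f := (continuous_halfWidth hKb).comp continuous_subtype_val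
  have hgc : Continuous g := (continuous_halfWidth hLb).comp continuous_subtype_val
  have hfp : ∀ v, 0 < f v := fun v => halfWidth_pos hKb (mem_sphere_zero_iff_norm.mp v.2)
  have hgp : ∀ v, 0 < g v := fun v => halfWidth_pos hLb (mem_sphere_zero_iff_norm.mp v.2)
  set A : ℝ := ∫ v, f v ^ q ∂sphMeasure n with hAdef
  set B : ℝ := ∫ v, g v ^ q ∂sphMeasure n with hBdef
  set C : ℝ := ∫ v, f v ^ (q + p) * g v ^ (-p) ∂sphMeasure n with hCdef
  set C' : ℝ := ∫ v, g v ^ (q + p) * f v ^ (-p) ∂sphMeasure n with hC'def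
  have hApos : 0 < A := integral_rpow_pos hn q hfc hfp
  have hBpos : 0 < B := integral_rpow_pos hn q hgc hgp
  have hnpos : (0 : ℝ) < 1 / n := by
    have : (0 : ℝ) < n := by exact_mod_cast (by omega : 0 < n)
    positivity
  have hnne : (1 / (n : ℝ)) ≠ 0 := ne_of_gt hnpos
  -- identifications
  have wK : widthIntegral n i K = (1 / (n : ℝ)) * A := rfl
  have wL : widthIntegral n i L = (1 / (n : ℝ)) * B := rfl
  have lKL : lpMixedWidthIntegral n i p K L = (1 / (n : ℝ)) * C := rfl
  have lLK : lpMixedWidthIntegral n i p L K = (1 / (n : ℝ)) * C' := rfl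
  have epow : ∀ (F : sphere (0 : Euc n) 1 → ℝ), (∀ v, 0 < F v) →
      ∀ v, F v ^ (q + p) * F v ^ (-p) = F v ^ q := by
    intro F hF v
    rw [← Real.rpow_add (hF v)]
    congr 1
    ring
  have lKK : lpMixedWidthIntegral n i p K K = (1 / (n : ℝ)) * A := by
    have : (fun v : sphere (0 : Euc n) 1 => f v ^ (q + p) * f v ^ (-p))
        = fun v => f v ^ q := funext (epow f hfp)
    show (1 / (n : ℝ)) * (∫ v, f v ^ (q + p) * f v ^ (-p) ∂sphMeasure n) = _
    rw [show (∫ v, f v ^ (q + p) * f v ^ (-p) ∂sphMeasure n) = A by rw [hAdef]; exact congrArg _ this]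
  have lLL : lpMixedWidthIntegral n i p L L = (1 / (n : ℝ)) * B := by
    have : (fun v : sphere (0 : Euc n) 1 => g v ^ (q + p) * g v ^ (-p))
        = fun v => g v ^ q := funext (epow g hgp)
    show (1 / (n : ℝ)) * (∫ v, g v ^ (q + p) * g v ^ (-p) ∂sphMeasure n) = _
    rw [show (∫ v, g v ^ (q + p) * g v ^ (-p) ∂sphMeasure n) = B by rw [hBdef]; exact congrArg _ this]
  -- integrated inequalities
  have ineqC : B + (q + p) / q * (A - B) ≤ C := integral_key_le hq hp hfc hgc hfp hgp
  have ineqC' : A + (q + p) / q * (B - A) ≤ C' := integral_key_le hq hp hgc hfc hgp hfp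
  have hr1 : 1 < (q + p) / q := by rw [lt_div_iff₀ hq]; linarith
  -- derive A = B and C = B in both cases
  have main : A = B ∧ C = B := by
    rcases h with h1 | h2
    · have e1 : C = B := by
        have := h1 L hLM
        rw [lKL, lLL] at this
        exact mul_left_cancel₀ hnne this
      have e2 : A = C' := by
        have := h1 K hKM
        rw [lKK, lLK] at this
        exact mul_left_cancel₀ hnne this
      have hAB : A ≤ B := by nlinarith
      have hBA : B ≤ A := by nlinarith
      exact ⟨le_antisymm hAB hBA, e1⟩
    · have e1 : C = A := by
        have := h2 L hLM
        rw [lKL, lLL, wK, wL] at this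
        rw [div_self (by positivity : (1 / (n : ℝ)) * B ≠ 0)] at this
        rw [div_eq_one_iff_eq (by positivity : (1 / (n : ℝ)) * A ≠ 0)] at this
        exact mul_left_cancel₀ hnne this
      have e2 : C' = B := by
        have := h2 K hKM
        rw [lKK, lLK, wK, wL] at this
        rw [div_self (by positivity : (1 / (n : ℝ)) * A ≠ 0)] at this
        rw [eq_comm, div_eq_one_iff_eq (by positivity : (1 / (n : ℝ)) * B ≠ 0)] at this
        exact mul_left_cancel₀ hnne this
      have hAB : A ≤ B := by nlinarith
      have hBA : B ≤ A := by nlinarith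
      have hABeq : A = B := le_antisymm hAB hBA
      exact ⟨hABeq, by rw [e1, hABeq]⟩
  have hfg : ∀ v, f v = g v :=
    eq_of_integral_key hn hq hp hfc hgc hfp hgp (by rw [← hAdef, ← hBdef]; exact main.1)
      (by rw [← hCdef, ← hBdef]; exact main.2)
  have humem : u ∈ sphere (0 : Euc n) 1 := mem_sphere_zero_iff_norm.mpr hu
  exact hfg ⟨u, humem⟩

end
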